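/- arXiv:2203.13171 — 3 statements merged into one kernel-verified Lean document; each statement's English description precedes it below -/
import Mathlib

section
/- Let $Z_A, X_A, D_B, E_B$ be self-adjoint operators (on Hilbert spaces $H_A$, $H_B$ respectively) satisfying $Z_A^2 = P_A$, $X_A^2 = Q_A$, $D_B^2 = P_B$, $E_B^2 = Q_B$ for projections $P_A,Q_A,P_B,Q_B$. Then the operator identity holds: $\sqrt{2}\big[\tfrac{1}{\sqrt{2}}(P_A\otimes 1 + Q_A \otimes 1 + 1\otimes P_B + 1 \otimes Q_B) - Z_A\otimes(D_B+E_B) - X_A\otimes(D_B-E_B)\big] = (Z_A\otimes 1 - 1\otimes\tfrac{D_B+E_B}{\sqrt{2}})^2 + (X_A\otimes 1 - 1\otimes\tfrac{D_B-E_B}{\sqrt{2}})^2$. -/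
/-!
With `a = Z_A ⊗ 1`, `b = X_A ⊗ 1`, `d = 1 ⊗ D_B`, `e = 1 ⊗ E_B`, the factors on Alice's side
commute with those on Bob's, so each square expands like a commutative binomial. The only
non-commutative cross terms, `d e + e d`, cancel in `(d + e)² + (d - e)² = 2 (d² + e²)`, and the
identity reduces to `√2 · √2 = 2`.
-/

open Matrix Kronecker

theorem smul_sub_mul_sub_mul_eq_sq_add_sq {k R : Type*} [Field k] [NeZero (2 : k)] [Ring R]
    [Algebra k R]
    {a b d e : R} (hu : Commute a (d + e)) (hv : Commute b (d - e)) {t : k} (ht : t * t = 2) :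
    t • (t⁻¹ • (a ^ 2 + b ^ 2 + d ^ 2 + e ^ 2) - a * (d + e) - b * (d - e)) =
      (a - t⁻¹ • (d + e)) ^ 2 + (b - t⁻¹ • (d - e)) ^ 2 := by
  have ht0 : t ≠ 0 := by
    rintro rfl
    exact two_ne_zero (ht.symm.trans (zero_mul 0))
  have hsq : (d + e) ^ 2 + (d - e) ^ 2 = (2 : k) • (d ^ 2 + e ^ 2) := by
    rw [two_smul]
    noncomm_ring
  rw [(hu.smul_right _).sub_sq, (hv.smul_right _).sub_sq]
  simp only [smul_pow, mul_smul_comm, two_mul, add_mul]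
  linear_combination (norm := skip) (-t⁻¹ ^ 2) • hsq
  match_scalars <;> grind

namespace Matrix

variable {l m n p α : Type*}

theorem kronecker_sub [NonUnitalNonAssocRing α] (A : Matrix l m α) (B₁ B₂ : Matrix n p α) :
    A ⊗ₖ (B₁ - B₂) = A ⊗ₖ B₁ - A ⊗ₖ B₂ := by
  ext
  simp [mul_sub]

variable [CommSemiring α]

theorem kronecker_one_mul_one_kronecker [Fintype m] [Fintype n] [DecidableEq m] [DecidableEq n]
    (A : Matrix l m α) (B : Matrix n p α) :
    (A ⊗ₖ (1 : Matrix n n α)) * ((1 : Matrix m m α) ⊗ₖ B) = A ⊗ₖ B := by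
  rw [← mul_kronecker_mul, Matrix.mul_one, Matrix.one_mul]

theorem one_kronecker_mul_kronecker_one [Fintype l] [Fintype p] [DecidableEq l] [DecidableEq p]
    (A : Matrix l m α) (B : Matrix n p α) :
    ((1 : Matrix l l α) ⊗ₖ B) * (A ⊗ₖ (1 : Matrix p p α)) = A ⊗ₖ B := by
  rw [← mul_kronecker_mul, Matrix.mul_one, Matrix.one_mul]

theorem commute_kronecker_one_one_kronecker [Fintype m] [Fintype n] [DecidableEq m]
    [DecidableEq n] (A : Matrix m m α) (B : Matrix n n α) :
    Commute (A ⊗ₖ (1 : Matrix n n α)) ((1 : Matrix m m α) ⊗ₖ B) := by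
  rw [Commute, SemiconjBy, kronecker_one_mul_one_kronecker, one_kronecker_mul_kronecker_one]

theorem kronecker_one_sq [Fintype m] [Fintype n] [DecidableEq m] [DecidableEq n]
    (A : Matrix m m α) :
    (A ⊗ₖ (1 : Matrix n n α)) ^ 2 = (A * A) ⊗ₖ (1 : Matrix n n α) := by
  rw [sq, ← mul_kronecker_mul, mul_one]

theorem one_kronecker_sq [Fintype m] [Fintype n] [DecidableEq m] [DecidableEq n]
    (B : Matrix n n α) :
    ((1 : Matrix m m α) ⊗ₖ B) ^ 2 = (1 : Matrix m m α) ⊗ₖ (B * B) := by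
  rw [sq, ← mul_kronecker_mul, mul_one]

end Matrix

theorem sos_decomposition_general {m n : Type*} [Fintype m] [Fintype n]
    [DecidableEq m] [DecidableEq n]
    (ZA XA : Matrix m m ℂ) (DB EB : Matrix n n ℂ)
    (PA QA : Matrix m m ℂ) (PB QB : Matrix n n ℂ)
    (hZ2 : ZA * ZA = PA) (hX2 : XA * XA = QA)
    (hD2 : DB * DB = PB) (hE2 : EB * EB = QB) :
    (Real.sqrt 2 : ℂ) •
      (((Real.sqrt 2 : ℂ))⁻¹ • (PA ⊗ₖ (1 : Matrix n n ℂ) + QA ⊗ₖ 1 + (1 : Matrix m m ℂ) ⊗ₖ PB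
          + (1 : Matrix m m ℂ) ⊗ₖ QB)
        - ZA ⊗ₖ (DB + EB) - XA ⊗ₖ (DB - EB)) =
      (ZA ⊗ₖ (1 : Matrix n n ℂ)
          - ((Real.sqrt 2 : ℂ))⁻¹ • ((1 : Matrix m m ℂ) ⊗ₖ (DB + EB))) ^ 2
      + (XA ⊗ₖ (1 : Matrix n n ℂ)
          - ((Real.sqrt 2 : ℂ))⁻¹ • ((1 : Matrix m m ℂ) ⊗ₖ (DB - EB))) ^ 2 := by
  have hsqrt : (Real.sqrt 2 : ℂ) * Real.sqrt 2 = 2 := by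
    exact_mod_cast Real.mul_self_sqrt zero_le_two
  have key := smul_sub_mul_sub_mul_eq_sq_add_sq
    ((commute_kronecker_one_one_kronecker ZA DB).add_right
      (commute_kronecker_one_one_kronecker ZA EB))
    ((commute_kronecker_one_one_kronecker XA DB).sub_right
      (commute_kronecker_one_one_kronecker XA EB))
    hsqrt
  rwa [kronecker_one_sq, kronecker_one_sq, one_kronecker_sq, one_kronecker_sq, hZ2, hX2, hD2, hE2,
    ← kronecker_add, ← kronecker_sub, kronecker_one_mul_one_kronecker,
    kronecker_one_mul_one_kronecker] at key

/-- Sum-of-squares decomposition of the shifted Bell operator (Eq. (A16)). -/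
theorem sos_decomposition {m n : Type*} [Fintype m] [Fintype n]
    [DecidableEq m] [DecidableEq n]
    (ZA XA : Matrix m m ℂ) (DB EB : Matrix n n ℂ)
    (PA QA : Matrix m m ℂ) (PB QB : Matrix n n ℂ)
    (hZA : ZAᴴ = ZA) (hXA : XAᴴ = XA) (hDB : DBᴴ = DB) (hEB : EBᴴ = EB)
    (hPA : PAᴴ = PA) (hPA2 : PA * PA = PA)
    (hQA : QAᴴ = QA) (hQA2 : QA * QA = QA)
    (hPB : PBᴴ = PB) (hPB2 : PB * PB = PB)
    (hQB : QBᴴ = QB) (hQB2 : QB * QB = QB)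
    (hZ2 : ZA * ZA = PA) (hX2 : XA * XA = QA)
    (hD2 : DB * DB = PB) (hE2 : EB * EB = QB) :
    (Real.sqrt 2 : ℂ) •
      (((Real.sqrt 2 : ℂ))⁻¹ • (PA ⊗ₖ (1 : Matrix n n ℂ) + QA ⊗ₖ 1 + (1 : Matrix m m ℂ) ⊗ₖ PB
          + (1 : Matrix m m ℂ) ⊗ₖ QB)
        - ZA ⊗ₖ (DB + EB) - XA ⊗ₖ (DB - EB)) =
      (ZA ⊗ₖ (1 : Matrix n n ℂ)
          - ((Real.sqrt 2 : ℂ))⁻¹ • ((1 : Matrix m m ℂ) ⊗ₖ (DB + EB))) ^ 2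
      + (XA ⊗ₖ (1 : Matrix n n ℂ)
          - ((Real.sqrt 2 : ℂ))⁻¹ • ((1 : Matrix m m ℂ) ⊗ₖ (DB - EB))) ^ 2 :=
  sos_decomposition_general ZA XA DB EB PA QA PB QB hZ2 hX2 hD2 hE2
end

section
/- Let $\psi \in H_A\otimes H_B$ and let $\{M_j\}_{j=0}^2$ and $\{P_k\}_{k=0}^2$ be PVMs on $H_A$ and $H_B$ respectively. Suppose $Z_A = \sum_j \omega^j M_j$ and $Z_B = \sum_k \omega^k P_k$ (with $\omega = e^{2\pi i /3}$) satisfy $(Z_A\otimes 1)\psi = (1\otimes Z_B)\psi$. Then for all $j,k$: $(M_j\otimes P_k)\psi = \delta_{jk}(M_j\otimes 1)\psi$. -/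
open Matrix Kronecker

/-! Multiplying the relation `(Z_A ⊗ 1)ψ = (1 ⊗ Z_B)ψ` on the left by `Mⱼ ⊗ Pₖ` gives
`ωʲ (Mⱼ ⊗ Pₖ)ψ = ωᵏ (Mⱼ ⊗ Pₖ)ψ`, because orthogonal idempotents absorb the sums defining
`Z_A` and `Z_B` as scalars. Distinct powers of a primitive root differ, so `(Mⱼ ⊗ Pₖ)ψ = 0` for
`j ≠ k`; summing `Mⱼ ⊗ Pₖ` over `k` with `∑ₖ Pₖ = 1` then leaves only the term `k = j`. -/

theorem Matrix.kronecker_sum {ι R l m n p : Type*} [CommSemiring R] (A : Matrix l m R)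
    (s : Finset ι) (B : ι → Matrix n p R) :
    A ⊗ₖ ∑ i ∈ s, B i = ∑ i ∈ s, A ⊗ₖ B i :=
  map_sum (kroneckerBilinear (R := R) (n := n) (p := p) A) B s

theorem OrthogonalIdempotents.mul_sum_smul {ι R A : Type*} [Fintype ι] [CommSemiring R]
    [Semiring A] [Algebra R A] {e : ι → A} (he : OrthogonalIdempotents e) (c : ι → R) (i : ι) :
    e i * ∑ j, c j • e j = c i • e i := by
  classical
  simp [Finset.mul_sum, he.mul_eq]

theorem Matrix.mulVec_eq_zero_of_mul_eq_smul {K l m : Type*} [Field K] [Fintype m]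
    {X : Matrix l m K} {A B : Matrix m m K} {v : m → K} (hv : A *ᵥ v = B *ᵥ v)
    {α β : K} (hA : X * A = α • X) (hB : X * B = β • X) (hαβ : α ≠ β) : X *ᵥ v = 0 := by
  have h : (α - β) • X *ᵥ v = 0 := by
    rw [sub_smul, ← smul_mulVec, ← smul_mulVec, ← hA, ← hB, ← mulVec_mulVec,
      ← mulVec_mulVec, hv, sub_self]
  exact (smul_eq_zero.mp h).resolve_left (sub_ne_zero.mpr hαβ)

section ClockCorrelation

variable {K m n : Type*} [Field K] [Fintype m] [Fintype n] [DecidableEq m] [DecidableEq n]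
  {N : ℕ} {ζ : K} {M : Fin N → Matrix m m K} {P : Fin N → Matrix n n K} {ψ : m × n → K}

theorem kronecker_mulVec_eq_zero_of_ne (hζ : IsPrimitiveRoot ζ N)
    (hM : OrthogonalIdempotents M) (hP : OrthogonalIdempotents P)
    (hZ : ((∑ j : Fin N, ζ ^ (j : ℕ) • M j) ⊗ₖ (1 : Matrix n n K)) *ᵥ ψ
        = ((1 : Matrix m m K) ⊗ₖ ∑ k : Fin N, ζ ^ (k : ℕ) • P k) *ᵥ ψ)
    {j k : Fin N} (hjk : j ≠ k) : (M j ⊗ₖ P k) *ᵥ ψ = 0 :=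
  mulVec_eq_zero_of_mul_eq_smul hZ
    (by rw [← mul_kronecker_mul, hM.mul_sum_smul, mul_one, smul_kronecker])
    (by rw [← mul_kronecker_mul, hP.mul_sum_smul, mul_one, kronecker_smul])
    fun h ↦ hjk (Fin.ext (hζ.pow_inj j.isLt k.isLt h))

theorem kronecker_mulVec_eq_ite (hζ : IsPrimitiveRoot ζ N)
    (hM : OrthogonalIdempotents M) (hP : OrthogonalIdempotents P) (hPsum : ∑ k, P k = 1)
    (hZ : ((∑ j : Fin N, ζ ^ (j : ℕ) • M j) ⊗ₖ (1 : Matrix n n K)) *ᵥ ψ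
        = ((1 : Matrix m m K) ⊗ₖ ∑ k : Fin N, ζ ^ (k : ℕ) • P k) *ᵥ ψ) (j k : Fin N) :
    (M j ⊗ₖ P k) *ᵥ ψ = if j = k then (M j ⊗ₖ (1 : Matrix n n K)) *ᵥ ψ else 0 := by
  split_ifs with hjk
  · subst hjk
    rw [← hPsum, kronecker_sum, sum_mulVec, Finset.sum_eq_single_of_mem j (Finset.mem_univ j)]
    exact fun k _ hkj ↦ kronecker_mulVec_eq_zero_of_ne hζ hM hP hZ hkj.symm
  · exact kronecker_mulVec_eq_zero_of_ne hζ hM hP hZ hjk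

end ClockCorrelation

theorem pvm_delta_correlation_general {m n : Type*} [Fintype m] [Fintype n]
    [DecidableEq m] [DecidableEq n]
    (ψ : m × n → ℂ) (M : Fin 3 → Matrix m m ℂ) (P : Fin 3 → Matrix n n ℂ)
    (hM2 : ∀ j, M j * M j = M j)
    (hMorth : ∀ j j', j ≠ j' → M j * M j' = 0)
    (hP2 : ∀ k, P k * P k = P k)
    (hPorth : ∀ k k', k ≠ k' → P k * P k' = 0) (hPsum : ∑ k, P k = 1)
    (ω : ℂ) (hω : ω = Complex.exp (2 * Real.pi * Complex.I / 3))
    (hZ : ((∑ j : Fin 3, ω ^ (j : ℕ) • M j) ⊗ₖ (1 : Matrix n n ℂ)).mulVec ψ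
        = ((1 : Matrix m m ℂ) ⊗ₖ (∑ k : Fin 3, ω ^ (k : ℕ) • P k)).mulVec ψ) :
    ∀ j k, (M j ⊗ₖ P k).mulVec ψ
        = if j = k then (M j ⊗ₖ (1 : Matrix n n ℂ)).mulVec ψ else 0 := by
  have hω3 : IsPrimitiveRoot ω 3 := by
    simpa [hω] using Complex.isPrimitiveRoot_exp 3 three_ne_zero
  exact kronecker_mulVec_eq_ite hω3 ⟨hM2, hMorth⟩ ⟨hP2, hPorth⟩ hPsum hZ

/-- Eq. (A49): if `Z_A = Σⱼ ωʲ Mⱼ` and `Z_B = Σₖ ωᵏ Pₖ` agree on `ψ`, then for the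
two PVMs the outcomes are perfectly correlated on `ψ`:
`(Mⱼ ⊗ Pₖ)ψ = δⱼₖ (Mⱼ ⊗ 1)ψ`. -/
theorem pvm_delta_correlation {m n : Type*} [Fintype m] [Fintype n]
    [DecidableEq m] [DecidableEq n]
    (ψ : m × n → ℂ) (M : Fin 3 → Matrix m m ℂ) (P : Fin 3 → Matrix n n ℂ)
    (hMh : ∀ j, (M j)ᴴ = M j) (hM2 : ∀ j, M j * M j = M j)
    (hMorth : ∀ j j', j ≠ j' → M j * M j' = 0) (hMsum : ∑ j, M j = 1)
    (hPh : ∀ k, (P k)ᴴ = P k) (hP2 : ∀ k, P k * P k = P k)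
    (hPorth : ∀ k k', k ≠ k' → P k * P k' = 0) (hPsum : ∑ k, P k = 1)
    (ω : ℂ) (hω : ω = Complex.exp (2 * Real.pi * Complex.I / 3))
    (hZ : ((∑ j : Fin 3, ω ^ (j : ℕ) • M j) ⊗ₖ (1 : Matrix n n ℂ)).mulVec ψ
        = ((1 : Matrix m m ℂ) ⊗ₖ (∑ k : Fin 3, ω ^ (k : ℕ) • P k)).mulVec ψ) :
    ∀ j k, (M j ⊗ₖ P k).mulVec ψ
        = if j = k then (M j ⊗ₖ (1 : Matrix n n ℂ)).mulVec ψ else 0 :=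
  pvm_delta_correlation_general ψ M P hM2 hMorth hP2 hPorth hPsum ω hω hZ
end

section
/- Let $H_A, H_B$ be finite-dimensional Hilbert spaces, $\psi \in H_A\otimes H_B$ a unit vector, $\{M_j\}_{j=0}^{2}$ a PVM on $H_A$ and $\{P_k\}_{k=0}^2$ a PVM on $H_B$ satisfying $(M_j\otimes P_k)\psi = \delta_{jk}(M_j\otimes 1)\psi$ and $\|(M_j\otimes 1)\psi\| = 1/\sqrt{3}$ for all $j$. Let $U_1^A, U_2^A$ be unitaries on $H_A$ and $U_1^B, U_2^B$ unitaries on $H_B$ with $(U_j^A M_j \otimes U_j^B P_j)\psi = (M_0\otimes 1)\psi$ for $j=1,2$. Then the vector $\Phi(\psi) := \sum_{j,k} (U_j^A M_j\otimes U_k^B P_k)\psi \otimes |j\rangle|k\rangle$ (with $U_0 = 1$) equals $\sqrt{3}\,(M_0\otimes 1)\psi \otimes |\phi_+\rangle$ where $|\phi_+\rangle = (|00\rangle+|11\rangle+|22\rangle)/\sqrt{3} \in \mathbb{C}^3\otimes\mathbb{C}^3$, and $\sqrt{3}\,(M_0\otimes 1)\psi$ is a unit vector. -/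
open Matrix Kronecker

noncomputable section

/-- The maximally entangled two-qutrit state `|φ₊⟩ = (|00⟩+|11⟩+|22⟩)/√3`. -/
def phiPlus : Fin 3 × Fin 3 → ℂ := fun p => if p.1 = p.2 then (Real.sqrt 3 : ℂ)⁻¹ else 0

/-!
Off the diagonal the delta-correlation kills every term of the isometry output, since the
unitaries act after the projections. On the diagonal the raising unitaries turn each block into
the `0`-block `(M₀ ⊗ 1)ψ`, so the output is that block tensored with `∑ⱼ |jj⟩ = √3 |φ₊⟩`. Its
norm is `√3 · (1/√3) = 1`.
-/

namespace Matrix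

theorem kronecker_mul_mulVec_eq_zero {R l m m' k n n' : Type*} [CommSemiring R] [Fintype m]
    [Fintype m'] [Fintype n] [Fintype n'] {A : Matrix l m R} {M : Matrix m m' R}
    {B : Matrix k n R} {P : Matrix n n' R} {ψ : m' × n' → R} (h : (M ⊗ₖ P) *ᵥ ψ = 0) :
    ((A * M) ⊗ₖ (B * P)) *ᵥ ψ = 0 := by
  rw [mul_kronecker_mul, ← mulVec_mulVec, h, mulVec_zero]

end Matrix

theorem Fintype.sum_sum_mul_ite_eq_pair {ι κ R : Type*} [Fintype ι] [Fintype κ] [DecidableEq ι]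
    [DecidableEq κ] [NonAssocSemiring R] (f : ι → κ → R) (p : ι × κ) :
    ∑ j, ∑ k, f j k * (if p = (j, k) then 1 else 0) = f p.1 p.2 := by
  simp only [mul_ite, mul_one, mul_zero, ← Fintype.sum_prod_type', Prod.mk.eta,
    Finset.sum_ite_eq, Finset.mem_univ, if_true]

theorem star_ofReal_smul_dotProduct_ofReal_smul {ι : Type*} [Fintype ι] (r : ℝ) (v : ι → ℂ) :
    star ((r : ℂ) • v) ⬝ᵥ ((r : ℂ) • v) = ((r ^ 2 : ℝ) : ℂ) * (star v ⬝ᵥ v) := by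
  rw [star_smul, smul_dotProduct, dotProduct_smul, Complex.star_def, Complex.conj_ofReal,
    smul_eq_mul, smul_eq_mul, ← mul_assoc, Complex.ofReal_pow, sq]

section RaisedBlocks

variable {ι m n : Type*} [DecidableEq ι] [Fintype m] [Fintype n] [DecidableEq m] [DecidableEq n]
  {ψ : m × n → ℂ} {M U : ι → Matrix m m ℂ} {P V : ι → Matrix n n ℂ} {i₀ : ι}

theorem raised_block_mulVec
    (hdelta : ∀ j k, (M j ⊗ₖ P k) *ᵥ ψ = if j = k then (M j ⊗ₖ (1 : Matrix n n ℂ)) *ᵥ ψ else 0)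
    (hU0 : U i₀ = 1) (hV0 : V i₀ = 1)
    (hraise : ∀ j, j ≠ i₀ → ((U j * M j) ⊗ₖ (V j * P j)) *ᵥ ψ = (M i₀ ⊗ₖ 1) *ᵥ ψ) (j k : ι) :
    ((U j * M j) ⊗ₖ (V k * P k)) *ᵥ ψ = if j = k then (M i₀ ⊗ₖ 1) *ᵥ ψ else 0 := by
  split_ifs with hjk
  · subst hjk
    by_cases hj : j = i₀
    · subst hj
      rw [hU0, hV0, one_mul, one_mul, hdelta, if_pos rfl]
    · exact hraise j hj
  · exact kronecker_mul_mulVec_eq_zero (by rw [hdelta, if_neg hjk])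

end RaisedBlocks

theorem isometry_output_factorizes_general {m n : Type*} [Fintype m] [Fintype n]
    [DecidableEq m] [DecidableEq n]
    (ψ : m × n → ℂ)
    (M : Fin 3 → Matrix m m ℂ) (P : Fin 3 → Matrix n n ℂ)
    (hdelta : ∀ j k, (M j ⊗ₖ P k).mulVec ψ
        = if j = k then (M j ⊗ₖ (1 : Matrix n n ℂ)).mulVec ψ else 0)
    (hnorm : ∀ j, star ((M j ⊗ₖ (1 : Matrix n n ℂ)).mulVec ψ)
        ⬝ᵥ (M j ⊗ₖ (1 : Matrix n n ℂ)).mulVec ψ = 1 / 3)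
    (U : Fin 3 → Matrix m m ℂ) (V : Fin 3 → Matrix n n ℂ)
    (hU0 : U 0 = 1) (hV0 : V 0 = 1)
    (hraise : ∀ j, j ≠ 0 →
      ((U j * M j) ⊗ₖ (V j * P j)).mulVec ψ = (M 0 ⊗ₖ (1 : Matrix n n ℂ)).mulVec ψ) :
    ((fun x : (m × n) × (Fin 3 × Fin 3) =>
        ∑ j : Fin 3, ∑ k : Fin 3,
          ((U j * M j) ⊗ₖ (V k * P k)).mulVec ψ x.1 * (if x.2 = (j, k) then 1 else 0))
      = fun x => (Real.sqrt 3 : ℂ) * (M 0 ⊗ₖ (1 : Matrix n n ℂ)).mulVec ψ x.1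
          * phiPlus x.2) ∧
    star ((Real.sqrt 3 : ℂ) • (M 0 ⊗ₖ (1 : Matrix n n ℂ)).mulVec ψ)
      ⬝ᵥ ((Real.sqrt 3 : ℂ) • (M 0 ⊗ₖ (1 : Matrix n n ℂ)).mulVec ψ) = 1 := by
  constructor
  · funext ⟨y, a, b⟩
    rw [Fintype.sum_sum_mul_ite_eq_pair, raised_block_mulVec hdelta hU0 hV0 hraise, phiPlus]
    split_ifs
    · field_simp
    · simp
  · rw [star_ofReal_smul_dotProduct_ofReal_smul, hnorm 0, Real.sq_sqrt (by norm_num)]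
    norm_num

/-- Abstract form of the final step (Eq. (A58)) of the self-testing isometry: the
isometry output factorizes as a junk state tensored with `|φ₊⟩`. -/
theorem isometry_output_factorizes {m n : Type*} [Fintype m] [Fintype n]
    [DecidableEq m] [DecidableEq n]
    (ψ : m × n → ℂ) (hψ : star ψ ⬝ᵥ ψ = 1)
    (M : Fin 3 → Matrix m m ℂ) (P : Fin 3 → Matrix n n ℂ)
    (hMh : ∀ j, (M j)ᴴ = M j) (hM2 : ∀ j, M j * M j = M j)
    (hMorth : ∀ j j', j ≠ j' → M j * M j' = 0) (hMsum : ∑ j, M j = 1)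
    (hPh : ∀ k, (P k)ᴴ = P k) (hP2 : ∀ k, P k * P k = P k)
    (hPorth : ∀ k k', k ≠ k' → P k * P k' = 0) (hPsum : ∑ k, P k = 1)
    (hdelta : ∀ j k, (M j ⊗ₖ P k).mulVec ψ
        = if j = k then (M j ⊗ₖ (1 : Matrix n n ℂ)).mulVec ψ else 0)
    (hnorm : ∀ j, star ((M j ⊗ₖ (1 : Matrix n n ℂ)).mulVec ψ)
        ⬝ᵥ (M j ⊗ₖ (1 : Matrix n n ℂ)).mulVec ψ = 1 / 3)
    (U : Fin 3 → Matrix m m ℂ) (V : Fin 3 → Matrix n n ℂ)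
    (hU : ∀ j, U j * (U j)ᴴ = 1 ∧ (U j)ᴴ * U j = 1)
    (hV : ∀ k, V k * (V k)ᴴ = 1 ∧ (V k)ᴴ * V k = 1)
    (hU0 : U 0 = 1) (hV0 : V 0 = 1)
    (hraise : ∀ j, j ≠ 0 →
      ((U j * M j) ⊗ₖ (V j * P j)).mulVec ψ = (M 0 ⊗ₖ (1 : Matrix n n ℂ)).mulVec ψ) :
    ((fun x : (m × n) × (Fin 3 × Fin 3) =>
        ∑ j : Fin 3, ∑ k : Fin 3,
          ((U j * M j) ⊗ₖ (V k * P k)).mulVec ψ x.1 * (if x.2 = (j, k) then 1 else 0))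
      = fun x => (Real.sqrt 3 : ℂ) * (M 0 ⊗ₖ (1 : Matrix n n ℂ)).mulVec ψ x.1
          * phiPlus x.2) ∧
    star ((Real.sqrt 3 : ℂ) • (M 0 ⊗ₖ (1 : Matrix n n ℂ)).mulVec ψ)
      ⬝ᵥ ((Real.sqrt 3 : ℂ) • (M 0 ⊗ₖ (1 : Matrix n n ℂ)).mulVec ψ) = 1 :=
  isometry_output_factorizes_general ψ M P hdelta hnorm U V hU0 hV0 hraise
end
end
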